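/- arXiv:1508.01978 — 3 statements merged into one kernel-verified Lean document; each statement's English description precedes it below -/
import Mathlib

section
/- The quantum relative entropy satisfies S(ρ ‖ Λ^{Ξ}(U ρ U†)) ≥ S(ρ ‖ Λ^{Ξ}(ρ)) for every density operator ρ, every unitary U, and every orthonormal basis Ξ, where Λ^{Ξ} is the dephasing channel in basis Ξ. Equivalently, among all states diagonal in basis Ξ, the dephased state Λ^{Ξ}(ρ) is the closest to ρ in relative entropy. -/
open Matrix Kronecker BigOperators Finset
open scoped Classical ComplexOrder

noncomputable section

variable {m n q : Type*} [Fintype m] [DecidableEq m] [Fintype n] [DecidableEq n]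
  [Fintype q] [DecidableEq q]

/-- the projector `|v⟩⟨v|` onto a vector `v`. -/
def proj (v : n → ℂ) : Matrix n n ℂ := vecMulVec v (star v)

/-- an orthonormal basis of `ℂ^n`, given as a family of vectors. -/
def ONB (b : n → n → ℂ) : Prop := ∀ i j, star (b i) ⬝ᵥ b j = if i = j then (1 : ℂ) else 0

/-- the standard (computational) basis. -/
def stdB : n → n → ℂ := fun i j => if i = j then 1 else 0

/-- matrix logarithm of a Hermitian matrix, via the spectral decomposition
(with the convention `log 0 = 0`); junk value `0` on non-Hermitian matrices. -/
def mlog (A : Matrix n n ℂ) : Matrix n n ℂ :=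
  if hA : A.IsHermitian then
    (hA.eigenvectorUnitary : Matrix n n ℂ) *
      diagonal (fun i => (Real.log (hA.eigenvalues i) : ℂ)) *
      star (hA.eigenvectorUnitary : Matrix n n ℂ)
  else 0

/-- von Neumann entropy `S(ρ) = -Tr ρ log ρ` (in nats). -/
def vN (ρ : Matrix n n ℂ) : ℝ := -(ρ * mlog ρ).trace.re

/-- quantum relative entropy `S(ρ‖σ) = Tr(ρ log ρ - ρ log σ)`, which is `+∞`
unless the support of `ρ` is contained in the support of `σ`. -/
def relEnt (ρ σ : Matrix n n ℂ) : EReal :=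
  if ∀ v, σ *ᵥ v = 0 → ρ *ᵥ v = 0
  then (((ρ * (mlog ρ - mlog σ)).trace.re : ℝ) : EReal)
  else ⊤

/-- a density matrix. -/
def IsDensity (ρ : Matrix n n ℂ) : Prop := ρ.PosSemidef ∧ ρ.trace = 1

/-- the dephasing (pinching) channel in the basis `b`. -/
def dephase (b : n → n → ℂ) (ρ : Matrix n n ℂ) : Matrix n n ℂ :=
  ∑ i, proj (b i) * ρ * proj (b i)

/-- partial trace over the first factor. -/
def ptraceA (ρ : Matrix (m × n) (m × n) ℂ) : Matrix n n ℂ :=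
  Matrix.of fun j j' => ∑ i, ρ (i, j) (i, j')

/-- partial trace over the second factor. -/
def ptraceB (ρ : Matrix (m × n) (m × n) ℂ) : Matrix m m ℂ :=
  Matrix.of fun i i' => ∑ j, ρ (i, j) (i', j)

/-- the (unnormalized) steered state `⟨ξ|ρ|ξ⟩` on Bob's side, when Alice
obtains the outcome `ξ`. -/
def steer (ξ : m → ℂ) (ρ : Matrix (m × n) (m × n) ℂ) : Matrix n n ℂ :=
  Matrix.of fun j j' => ∑ i, ∑ i', star (ξ i) * ρ (i, j) (i', j') * ξ i'

/-- the probability `p^ξ = Tr[ρ (|ξ⟩⟨ξ| ⊗ I)]` of Alice's outcome `ξ`. -/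
def sprob (ξ : m → ℂ) (ρ : Matrix (m × n) (m × n) ℂ) : ℝ := (steer ξ ρ).trace.re

/-- the channel `I_A ⊗ Λ^{E_B}`: dephasing of the `B` factor in basis `b`. -/
def dephaseB (b : n → n → ℂ) (ρ : Matrix (m × n) (m × n) ℂ) : Matrix (m × n) (m × n) ℂ :=
  ∑ k, ((1 : Matrix m m ℂ) ⊗ₖ proj (b k)) * ρ * ((1 : Matrix m m ℂ) ⊗ₖ proj (b k))

/-- `b` is an orthonormal eigenbasis of `A`. -/
def IsEigenbasis (A : Matrix n n ℂ) (b : n → n → ℂ) : Prop :=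
  ONB b ∧ ∀ k, ∃ μ : ℝ, A *ᵥ b k = (μ : ℂ) • b k

/-- the `l₁`-norm of coherence of `τ` in the basis `b`. -/
def l1coh (b : n → n → ℂ) (τ : Matrix n n ℂ) : ℝ :=
  ∑ i, ∑ j, if i = j then 0 else ‖star (b i) ⬝ᵥ (τ *ᵥ b j)‖

/-- the trace norm `‖A‖₁ = Tr √(AᴴA)`. -/
def traceNorm (A : Matrix n n ℂ) : ℝ :=
  ∑ i, Real.sqrt ((Matrix.isHermitian_conjTranspose_mul_self A).eigenvalues i)

/-- the Fourier basis vectors `|ξ_k⟩ = d^{-1/2} Σ_j e^{-2πikj/d}|j⟩`. -/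
def fbasis (d : ℕ) (k : Fin d) : Fin d → ℂ := fun j =>
  (1 / Real.sqrt d) * Complex.exp (-(2 * Real.pi * Complex.I * (k : ℕ) * (j : ℕ)) / d)

/-!
Let `p_k = ⟨ξ_k|ρ|ξ_k⟩`. If `σ` is a state diagonal in `Ξ`, then `Ξ` is an eigenbasis of both
`σ` (eigenvalues `c_k = ⟨ξ_k|σ|ξ_k⟩`) and `Λ^Ξ(ρ)` (eigenvalues `p_k`), hence of their logarithms,
so `Tr ρ log σ = Σ_k p_k log c_k`, `Tr ρ log Λ^Ξ(ρ) = Σ_k p_k log p_k`. The claim is then Gibbs'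
inequality `Σ_k p_k log c_k ≤ Σ_k p_k log p_k` for the probability vectors `p` and `c`; the support
condition `ker σ ⊆ ker ρ` is exactly what makes `c_k = 0` force `p_k = 0`. The first inequality is
the case `σ = Λ^Ξ(UρU†)`.
-/

lemma Real.sum_mul_log_le_sum_mul_log {ι : Type*} (s : Finset ι) {p q : ι → ℝ}
    (hp : ∀ i ∈ s, 0 ≤ p i) (hq : ∀ i ∈ s, 0 ≤ q i) (hpq : ∀ i ∈ s, q i = 0 → p i = 0)
    (hsum : ∑ i ∈ s, q i ≤ ∑ i ∈ s, p i) :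
    ∑ i ∈ s, p i * Real.log (q i) ≤ ∑ i ∈ s, p i * Real.log (p i) := by
  have hterm : ∀ i ∈ s, p i * Real.log (q i) - p i * Real.log (p i) ≤ q i - p i := by
    intro i hi
    rcases (hp i hi).eq_or_lt with hpi | hpi
    · simp [← hpi, hq i hi]
    have hqi : 0 < q i := (hq i hi).lt_of_ne fun h => hpi.ne' (hpq i hi h.symm)
    calc p i * Real.log (q i) - p i * Real.log (p i) = p i * Real.log (q i / p i) := by
          rw [Real.log_div hqi.ne' hpi.ne']; ring
      _ ≤ p i * (q i / p i - 1) :=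
          mul_le_mul_of_nonneg_left (Real.log_le_sub_one_of_pos (div_pos hqi hpi)) hpi.le
      _ = q i - p i := by field_simp
  have := Finset.sum_le_sum hterm
  rw [Finset.sum_sub_distrib, Finset.sum_sub_distrib] at this
  linarith

namespace Matrix.IsHermitian

variable {𝕜 : Type*} [RCLike 𝕜] {A : Matrix n n 𝕜}

lemma cfc_mulVec_of_mulVec_eq_smul (hA : A.IsHermitian) (f : ℝ → ℝ) {v : n → 𝕜} {μ : ℝ}
    (hv : A *ᵥ v = (μ : 𝕜) • v) : hA.cfc f *ᵥ v = (f μ : 𝕜) • v := by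
  set U : Matrix n n 𝕜 := (hA.eigenvectorUnitary : Matrix n n 𝕜)
  set w : n → 𝕜 := star U *ᵥ v
  have hU : U * star U = 1 := Unitary.coe_mul_star_self _
  have hv' : v = U *ᵥ w := by simp [w, mulVec_mulVec, hU]
  have hDw : diagonal (RCLike.ofReal ∘ hA.eigenvalues) *ᵥ w = (μ : 𝕜) • w := by
    rw [← hA.conjStarAlgAut_star_eigenvectorUnitary, Unitary.conjStarAlgAut_star_apply]
    simp only [← mulVec_mulVec]
    rw [← hv', hv, mulVec_smul]
  have hfw : diagonal (RCLike.ofReal ∘ f ∘ hA.eigenvalues) *ᵥ w = (f μ : 𝕜) • w := by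
    funext i
    have hi := congrFun hDw i
    simp only [mulVec_diagonal, Function.comp_apply, Pi.smul_apply, smul_eq_mul] at hi ⊢
    rcases eq_or_ne (w i) 0 with h | h
    · simp [h]
    · rw [mul_left_injective₀ h hi |> RCLike.ofReal_injective]
  rw [IsHermitian.cfc, Unitary.conjStarAlgAut_apply]
  simp only [← mulVec_mulVec]
  rw [hfw, mulVec_smul, ← hv']

end Matrix.IsHermitian

omit [DecidableEq n] in
lemma proj_mulVec (v w : n → ℂ) : proj v *ᵥ w = (star v ⬝ᵥ w) • v := by
  simp [proj, vecMulVec_mulVec]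

omit [Fintype n] [DecidableEq n] in
lemma conjTranspose_proj (v : n → ℂ) : (proj v)ᴴ = proj v := by
  simp [proj, conjTranspose_vecMulVec]

omit [DecidableEq n] in
lemma Matrix.PosSemidef.dephase {ρ : Matrix n n ℂ} (hρ : ρ.PosSemidef) (b : n → n → ℂ) :
    (dephase b ρ).PosSemidef :=
  posSemidef_sum _ fun i _ => by
    simpa [conjTranspose_proj] using hρ.conjTranspose_mul_mul_same (proj (b i))

lemma mlog_eq_cfc {A : Matrix n n ℂ} (hA : A.IsHermitian) : mlog A = hA.cfc Real.log := by
  rw [mlog, dif_pos hA]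
  rfl

lemma mlog_mulVec_of_mulVec_eq_smul {A : Matrix n n ℂ} (hA : A.IsHermitian) {v : n → ℂ} {μ : ℝ}
    (hv : A *ᵥ v = (μ : ℂ) • v) : mlog A *ᵥ v = (Real.log μ : ℂ) • v := by
  rw [mlog_eq_cfc hA]
  exact hA.cfc_mulVec_of_mulVec_eq_smul _ hv

def outcomeProb (b : n → n → ℂ) (ρ : Matrix n n ℂ) (k : n) : ℝ :=
  (star (b k) ⬝ᵥ ρ *ᵥ b k).re

omit [DecidableEq n] in
lemma Matrix.IsHermitian.coe_outcomeProb {ρ : Matrix n n ℂ} (hρ : ρ.IsHermitian)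
    (b : n → n → ℂ) (k : n) : (outcomeProb b ρ k : ℂ) = star (b k) ⬝ᵥ ρ *ᵥ b k :=
  Complex.ext rfl (hρ.im_star_dotProduct_mulVec_self (b k)).symm

omit [DecidableEq n] in
lemma Matrix.PosSemidef.outcomeProb_nonneg {ρ : Matrix n n ℂ} (hρ : ρ.PosSemidef)
    (b : n → n → ℂ) (k : n) : 0 ≤ outcomeProb b ρ k :=
  (Complex.nonneg_iff.mp (hρ.dotProduct_mulVec_nonneg (b k))).1

lemma IsDensity.unitary_conj {ρ : Matrix n n ℂ} (hρ : IsDensity ρ) {U : Matrix n n ℂ}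
    (hU : U ∈ unitaryGroup n ℂ) : IsDensity (U * ρ * Uᴴ) := by
  refine ⟨hρ.1.mul_mul_conjTranspose_same U, ?_⟩
  rw [trace_mul_cycle, ← star_eq_conjTranspose, mem_unitaryGroup_iff'.mp hU, Matrix.one_mul, hρ.2]

namespace ONB

variable {b : n → n → ℂ}

lemma proj_mulVec_self (hb : ONB b) (i k : n) :
    proj (b i) *ᵥ b k = if i = k then b i else 0 := by
  rw [_root_.proj_mulVec, hb i k]
  split_ifs <;> simp

lemma sum_proj (hb : ONB b) : ∑ i, proj (b i) = 1 := by
  set B : Matrix n n ℂ := (Matrix.of b)ᵀ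
  have hB : Bᴴ * B = 1 := by
    ext i j
    simpa [B, Matrix.mul_apply, dotProduct, Matrix.one_apply] using hb i j
  have hB' : B * Bᴴ = 1 := mul_eq_one_comm.mp hB
  ext j l
  simpa [B, Matrix.mul_apply, proj, vecMulVec_apply, Matrix.sum_apply, Matrix.one_apply]
    using congrFun (congrFun hB' j) l

lemma eq_sum_vecMulVec (hb : ONB b) (A : Matrix n n ℂ) :
    A = ∑ k, vecMulVec (A *ᵥ b k) (star (b k)) := by
  conv_lhs => rw [← A.mul_one, ← hb.sum_proj]
  simp only [proj, Finset.mul_sum, mul_vecMulVec]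

lemma ext_mulVec (hb : ONB b) {A B : Matrix n n ℂ} (h : ∀ k, A *ᵥ b k = B *ᵥ b k) : A = B := by
  rw [hb.eq_sum_vecMulVec A, hb.eq_sum_vecMulVec B]
  simp only [h]

lemma trace_eq_sum (hb : ONB b) (A : Matrix n n ℂ) :
    A.trace = ∑ k, star (b k) ⬝ᵥ (A *ᵥ b k) := by
  conv_lhs => rw [hb.eq_sum_vecMulVec A]
  simp [trace_sum, dotProduct_comm]

lemma dephase_mulVec (hb : ONB b) (σ : Matrix n n ℂ) (k : n) :
    dephase b σ *ᵥ b k = (star (b k) ⬝ᵥ (σ *ᵥ b k)) • b k := by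
  simp_rw [dephase, sum_mulVec, ← mulVec_mulVec, hb.proj_mulVec_self]
  simp [apply_ite, -mulVec_mulVec, proj_mulVec]

lemma dephase_dephase (hb : ONB b) (σ : Matrix n n ℂ) :
    dephase b (dephase b σ) = dephase b σ :=
  hb.ext_mulVec fun k => by
    rw [hb.dephase_mulVec, hb.dephase_mulVec, dotProduct_smul, hb k k]
    simp

lemma trace_dephase (hb : ONB b) (σ : Matrix n n ℂ) : (dephase b σ).trace = σ.trace := by
  rw [hb.trace_eq_sum, hb.trace_eq_sum]
  simp [hb.dephase_mulVec, hb _ _]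

lemma isDensity_dephase (hb : ONB b) {ρ : Matrix n n ℂ} (hρ : IsDensity ρ) :
    IsDensity (dephase b ρ) :=
  ⟨hρ.1.dephase b, by rw [hb.trace_dephase, hρ.2]⟩

lemma mulVec_eq_zero_of_dephase_mulVec_eq_zero (hb : ONB b) {ρ : Matrix n n ℂ}
    (hρ : ρ.PosSemidef) {v : n → ℂ} (hv : dephase b ρ *ᵥ v = 0) : ρ *ᵥ v = 0 := by
  set w : n → n → ℂ := fun i => proj (b i) *ᵥ v
  have hsum : ∑ i, star (w i) ⬝ᵥ ρ *ᵥ w i = 0 := by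
    have : star v ⬝ᵥ dephase b ρ *ᵥ v = 0 := by simp [hv]
    simpa [w, dephase, sum_mulVec, dotProduct_sum, ← mulVec_mulVec, star_mulVec,
      dotProduct_mulVec, vecMul_vecMul, conjTranspose_proj] using this
  have hterm : ∀ i, ρ *ᵥ w i = 0 := fun i =>
    (hρ.dotProduct_mulVec_zero_iff _).mp <|
      (Finset.sum_eq_zero_iff_of_nonneg fun i _ => hρ.dotProduct_mulVec_nonneg (w i)).mp hsum i
        (Finset.mem_univ i)
  have hv_sum : v = ∑ i, w i := by
    simp only [w, ← sum_mulVec, hb.sum_proj, one_mulVec]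
  rw [hv_sum, mulVec_sum]
  simp [hterm]

lemma sum_outcomeProb (hb : ONB b) {ρ : Matrix n n ℂ} (hρ : ρ.trace = 1) :
    ∑ k, outcomeProb b ρ k = 1 := by
  simpa [outcomeProb, hρ, Complex.re_sum] using congrArg Complex.re (hb.trace_eq_sum ρ).symm

lemma dephase_mulVec_eq_outcomeProb_smul (hb : ONB b) {ρ : Matrix n n ℂ} (hρ : ρ.IsHermitian)
    (k : n) : dephase b ρ *ᵥ b k = (outcomeProb b ρ k : ℂ) • b k := by
  rw [hb.dephase_mulVec, hρ.coe_outcomeProb]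

lemma re_trace_mul_mlog (hb : ONB b) (ρ : Matrix n n ℂ) {M : Matrix n n ℂ} (hM : M.IsHermitian)
    {μ : n → ℝ} (hμ : ∀ k, M *ᵥ b k = (μ k : ℂ) • b k) :
    (ρ * mlog M).trace.re = ∑ k, outcomeProb b ρ k * Real.log (μ k) := by
  simp [hb.trace_eq_sum, ← mulVec_mulVec, mlog_mulVec_of_mulVec_eq_smul hM (hμ _),
    mulVec_smul, Complex.re_sum, outcomeProb, mul_comm]

lemma relEnt_dephase_le (hb : ONB b) {ρ σ : Matrix n n ℂ} (hρ : IsDensity ρ)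
    (hσ : IsDensity σ) (hσb : dephase b σ = σ) :
    relEnt ρ (dephase b ρ) ≤ relEnt ρ σ := by
  by_cases hsupp : ∀ v, σ *ᵥ v = 0 → ρ *ᵥ v = 0
  swap
  · simp [relEnt, hsupp]
  have hσ_eigen (k : n) : σ *ᵥ b k = (outcomeProb b σ k : ℂ) • b k := by
    conv_lhs => rw [← hσb]
    exact hb.dephase_mulVec_eq_outcomeProb_smul hσ.1.1 k
  have hsupp_outcome (k : n) (hk : outcomeProb b σ k = 0) : outcomeProb b ρ k = 0 := by
    have hρk : ρ *ᵥ b k = 0 := hsupp (b k) (by rw [hσ_eigen, hk]; simp)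
    simp [outcomeProb, hρk]
  have gibbs := Real.sum_mul_log_le_sum_mul_log Finset.univ
    (fun k _ => hρ.1.outcomeProb_nonneg b k) (fun k _ => hσ.1.outcomeProb_nonneg b k)
    (fun k _ => hsupp_outcome k) (by rw [hb.sum_outcomeProb hρ.2, hb.sum_outcomeProb hσ.2])
  rw [relEnt, relEnt, if_pos fun v => hb.mulVec_eq_zero_of_dephase_mulVec_eq_zero hρ.1,
    if_pos hsupp, EReal.coe_le_coe_iff]
  simp only [Matrix.mul_sub, trace_sub, Complex.sub_re,
    hb.re_trace_mul_mlog ρ hσ.1.1 hσ_eigen,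
    hb.re_trace_mul_mlog ρ (hρ.1.dephase b).1 (hb.dephase_mulVec_eq_outcomeProb_smul hρ.1.1)]
  linarith

end ONB

/-- `S(ρ‖Λ^Ξ(UρU†)) ≥ S(ρ‖Λ^Ξ(ρ))`; equivalently, among states diagonal in
the basis `Ξ` the dephased state `Λ^Ξ(ρ)` is closest to `ρ` in relative entropy. -/
theorem dephased_state_closest
    (ρ : Matrix n n ℂ) (hρ : IsDensity ρ)
    (b : n → n → ℂ) (hb : ONB b)
    (U : Matrix n n ℂ) (hU : U ∈ Matrix.unitaryGroup n ℂ) :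
    relEnt ρ (dephase b ρ) ≤ relEnt ρ (dephase b (U * ρ * Uᴴ)) ∧
    ∀ σ : Matrix n n ℂ, IsDensity σ → dephase b σ = σ →
      relEnt ρ (dephase b ρ) ≤ relEnt ρ σ := by
  have closest (σ : Matrix n n ℂ) (hσ : IsDensity σ) (hσb : dephase b σ = σ) :
      relEnt ρ (dephase b ρ) ≤ relEnt ρ σ :=
    hb.relEnt_dephase_le hρ hσ hσb
  exact ⟨closest _ (hb.isDensity_dephase (hρ.unitary_conj hU)) (hb.dephase_dephase _), closest⟩

end
end

section
/- Let ρ = Σ_{ij} ρ_{ij} |ii⟩⟨jj| be a maximally correlated state on C^d ⊗ C^d, and let Alice measure in the Fourier basis |ξ_k⟩ = (1/√d) Σ_j e^{−2πi kj/d} |j⟩, k = 0,…,d−1. Then each outcome k occurs with probability 1/d, each steered state ρ_B^{ξ_k} = d·⟨ξ_k|ρ|ξ_k⟩ satisfies S(ρ_B^{ξ_k}) = S(ρ), and Λ^{E_B}(ρ_B^{ξ_k}) = ρ_B, so the average relative-entropy coherence of the steered states equals S(ρ_B) − S(ρ). -/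
open Matrix Kronecker BigOperators Finset
open scoped Classical ComplexOrder

noncomputable section

variable {m n q : Type*} [Fintype m] [DecidableEq m] [Fintype n] [DecidableEq n]
  [Fintype q] [DecidableEq q]

/-
A maximally correlated state is `ρ = V R Vᴴ` for the isometry `V |c⟩ = |cc⟩` and the
coefficient matrix `R = (ρ_{ik})`. Alice's Fourier outcome `k` occurs with probability
`Tr R / d = 1/d` and leaves Bob in `U R Uᴴ`, `U` the diagonal unitary of phases `e^{2πikj/d}`.
Whenever `W V = 1`, `X^m χ(V A W) = X^n χ(A)`, so `V A W` and `A` share their nonzero eigenvalues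
and hence their entropy: both the steered states and `ρ` have the entropy of `R`. Finally
`U R Uᴴ` has the diagonal of `R`, which is `ρ_B`.
-/
section Entropy

variable {A : Matrix n n ℂ}

lemma mul_mlog_eq_cfc (hA : A.IsHermitian) :
    A * mlog A = cfc (fun x => x * Real.log x) A := by
  rw [cfc_mul (fun x => x) Real.log A (hg := A.finite_real_spectrum.continuousOn _), cfc_id' ℝ A,
    mlog, dif_pos hA, hA.cfc_eq, IsHermitian.cfc, Unitary.conjStarAlgAut_apply]
  rfl

open Polynomial in
lemma trace_cfc_eq_sum_eigenvalues (hA : A.IsHermitian) (f : ℝ → ℝ) :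
    (cfc f A).trace = ∑ i, (f (hA.eigenvalues i) : ℂ) := by
  rw [trace_eq_sum_roots_charpoly, hA.charpoly_cfc_eq, roots_prod]
  · simp
  · simp [Finset.prod_ne_zero_iff, X_sub_C_ne_zero]

lemma vN_eq_sum_negMulLog_eigenvalues (hA : A.IsHermitian) :
    vN A = ∑ i, Real.negMulLog (hA.eigenvalues i) := by
  rw [vN, mul_mlog_eq_cfc hA, trace_cfc_eq_sum_eigenvalues hA, ← Complex.ofReal_sum,
    Complex.ofReal_re, ← Finset.sum_neg_distrib]
  simp only [Real.negMulLog, neg_mul]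

lemma vN_eq_sum_roots_charpoly (hA : A.IsHermitian) :
    vN A = (A.charpoly.roots.map fun z => Real.negMulLog z.re).sum := by
  rw [vN_eq_sum_negMulLog_eigenvalues hA, hA.roots_charpoly_eq_eigenvalues, Multiset.map_map]
  simp [Function.comp_def, Finset.sum_map_val]

open Polynomial in
/-- `V A W` and `W V A` have the same nonzero spectrum, and zero eigenvalues carry no entropy. -/
lemma vN_mul_mul_eq_of_mul_eq_one {V : Matrix n m ℂ} {W : Matrix m n ℂ} (hWV : W * V = 1)
    {A : Matrix m m ℂ} (hA : A.IsHermitian) (hVAW : (V * A * W).IsHermitian) :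
    vN (V * A * W) = vN A := by
  have hroots := congrArg roots (charpoly_mul_comm' V (A * W))
  rw [Matrix.mul_assoc, hWV, Matrix.mul_one, ← Matrix.mul_assoc] at hroots
  rw [roots_mul ((monic_X_pow _).mul (charpoly_monic _)).ne_zero,
    roots_mul ((monic_X_pow _).mul (charpoly_monic _)).ne_zero, roots_X_pow, roots_X_pow] at hroots
  have hsum := congrArg (fun s => (s.map fun z => Real.negMulLog z.re).sum) hroots
  simp only [Multiset.map_add, Multiset.sum_add, Multiset.map_nsmul, Multiset.map_singleton,
    Complex.zero_re, Real.negMulLog_zero, Multiset.sum_nsmul, Multiset.sum_singleton, smul_zero,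
    zero_add] at hsum
  rw [vN_eq_sum_roots_charpoly hVAW, vN_eq_sum_roots_charpoly hA, hsum]

end Entropy

lemma dephase_stdB (M : Matrix n n ℂ) : dephase stdB M = diagonal M.diag := by
  ext a b
  simp only [dephase, stdB, proj, Matrix.sum_apply, Matrix.mul_apply, vecMulVec_apply,
    Pi.star_apply, apply_ite (star : ℂ → ℂ), star_one, star_zero, diagonal_apply, diag_apply]
  rcases eq_or_ne a b with rfl | h
  · simp
  · simp [h, h.symm]

def IsMaxCorrelated {ι : Type*} [DecidableEq ι] (ρ : Matrix (ι × ι) (ι × ι) ℂ) : Prop :=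
  ∀ i j k l, ρ (i, j) (k, l) = if i = j ∧ k = l then ρ (i, i) (k, k) else 0

-- The coefficients `ρ_{ik}` of `ρ = Σ ρ_{ik} |ii⟩⟨kk|`.
def mcCoeffs {ι : Type*} (ρ : Matrix (ι × ι) (ι × ι) ℂ) : Matrix ι ι ℂ :=
  of fun i k => ρ (i, i) (k, k)

def diagIsometry (ι : Type*) [DecidableEq ι] : Matrix (ι × ι) ι ℂ :=
  of fun p c => if p = (c, c) then 1 else 0

lemma isHermitian_mcCoeffs {ι : Type*} {ρ : Matrix (ι × ι) (ι × ι) ℂ}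
    (hρ : ρ.IsHermitian) : (mcCoeffs ρ).IsHermitian := by
  ext i k
  exact congrFun (congrFun hρ (i, i)) (k, k)

def IsUnbiased {ι : Type*} [Fintype ι] (ξ : ι → ℂ) : Prop :=
  ∀ j, star (ξ j) * ξ j = (Fintype.card ι : ℂ)⁻¹

lemma IsUnbiased.card_mul_star_mul_self {ι : Type*} [Fintype ι] {ξ : ι → ℂ}
    (hξ : IsUnbiased ξ) (j : ι) :
    (Fintype.card ι : ℂ) * (star (ξ j) * ξ j) = 1 := by
  have : Nonempty ι := ⟨j⟩
  rw [hξ, mul_inv_cancel₀ (Nat.cast_ne_zero.2 Fintype.card_ne_zero)]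

section MaxCorrelated

variable {ι : Type*} [Fintype ι] [DecidableEq ι] {ρ : Matrix (ι × ι) (ι × ι) ℂ}

lemma conjTranspose_diagIsometry_mul : (diagIsometry ι)ᴴ * diagIsometry ι = 1 := by
  ext c c'
  simp [diagIsometry, Matrix.mul_apply, Matrix.one_apply, apply_ite (star : ℂ → ℂ), eq_comm]

lemma diagIsometry_mul_mul_conjTranspose_apply (A : Matrix ι ι ℂ) (i j k l : ι) :
    (diagIsometry ι * A * (diagIsometry ι)ᴴ) (i, j) (k, l) =
      if i = j ∧ k = l then A i k else 0 := by
  simp only [diagIsometry, Matrix.mul_apply, conjTranspose_apply, of_apply,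
    apply_ite (star : ℂ → ℂ), star_one, star_zero, mul_ite, ite_mul, mul_one, mul_zero,
    one_mul, zero_mul, Prod.mk.injEq, ite_and, Finset.sum_ite_eq, Finset.mem_univ, if_true]
  split_ifs <;> simp_all

lemma IsMaxCorrelated.eq_diagIsometry_mul_mul (hmc : IsMaxCorrelated ρ) :
    ρ = diagIsometry ι * mcCoeffs ρ * (diagIsometry ι)ᴴ := by
  ext ⟨i, j⟩ ⟨k, l⟩
  rw [hmc, diagIsometry_mul_mul_conjTranspose_apply]
  congr

lemma IsMaxCorrelated.vN_mcCoeffs (hmc : IsMaxCorrelated ρ) (hρ : ρ.IsHermitian) :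
    vN (mcCoeffs ρ) = vN ρ := by
  have hconj := hmc.eq_diagIsometry_mul_mul
  conv_rhs => rw [hconj]
  exact (vN_mul_mul_eq_of_mul_eq_one conjTranspose_diagIsometry_mul (isHermitian_mcCoeffs hρ)
    (hconj ▸ hρ)).symm

lemma IsMaxCorrelated.trace_mcCoeffs (hmc : IsMaxCorrelated ρ) :
    (mcCoeffs ρ).trace = ρ.trace := by
  conv_rhs => rw [hmc.eq_diagIsometry_mul_mul, trace_mul_cycle, conjTranspose_diagIsometry_mul,
    Matrix.one_mul]

lemma IsMaxCorrelated.ptraceA_eq_diagonal (hmc : IsMaxCorrelated ρ) :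
    ptraceA ρ = diagonal (mcCoeffs ρ).diag := by
  ext j j'
  rw [ptraceA, of_apply, Finset.sum_eq_single j (fun i _ hi => by rw [hmc, if_neg fun h => hi h.1])
    (by simp), hmc]
  simp [diagonal_apply, mcCoeffs]

lemma IsMaxCorrelated.steer_eq_diagonal_mul_mul (hmc : IsMaxCorrelated ρ) (ξ : ι → ℂ) :
    steer ξ ρ = diagonal (star ξ) * mcCoeffs ρ * diagonal ξ := by
  ext j j'
  have hterm : ∀ i i', star (ξ i) * ρ (i, j) (i', j') * ξ i' =
      if i = j ∧ i' = j' then star (ξ j) * ρ (j, j) (j', j') * ξ j' else 0 := by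
    intro i i'
    rw [hmc]
    split_ifs with h
    · obtain ⟨rfl, rfl⟩ := h
      rfl
    · simp
  simp only [steer, of_apply]
  rw [Finset.sum_congr rfl fun i _ => Finset.sum_congr rfl fun i' _ => hterm i i']
  simp [ite_and, mul_diagonal, diagonal_mul, mcCoeffs]

variable {ξ : ι → ℂ}

lemma IsMaxCorrelated.sprob_eq (hmc : IsMaxCorrelated ρ) (hξ : IsUnbiased ξ)
    (htr : ρ.trace = 1) : sprob ξ ρ = 1 / Fintype.card ι := by
  have htrace : (steer ξ ρ).trace = (Fintype.card ι : ℂ)⁻¹ * ρ.trace := by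
    rw [hmc.steer_eq_diagonal_mul_mul, trace_mul_cycle, diagonal_mul_diagonal,
      ← hmc.trace_mcCoeffs, trace, trace, Finset.mul_sum]
    refine Finset.sum_congr rfl fun i _ => ?_
    rw [diag_apply, diag_apply, diagonal_mul, mul_comm (ξ i), Pi.star_apply, hξ]
  rw [sprob, htrace, htr, mul_one, one_div, ← Complex.ofReal_natCast, ← Complex.ofReal_inv,
    Complex.ofReal_re]

lemma IsMaxCorrelated.vN_smul_steer (hmc : IsMaxCorrelated ρ) (hρ : ρ.IsHermitian)
    (hξ : IsUnbiased ξ) :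
    vN ((Fintype.card ι : ℂ) • steer ξ ρ) = vN ρ := by
  set D := diagonal (star ξ)
  have hDH : Dᴴ = diagonal ξ := by rw [diagonal_conjTranspose, star_star]
  have hherm : ((Fintype.card ι : ℂ) • steer ξ ρ).IsHermitian := by
    rw [hmc.steer_eq_diagonal_mul_mul, ← hDH]
    exact (isHermitian_mul_mul_conjTranspose D (isHermitian_mcCoeffs hρ)).smul (.natCast _)
  have hinv : ((Fintype.card ι : ℂ) • Dᴴ) * D = 1 := by
    rw [hDH, smul_mul, diagonal_mul_diagonal, ← diagonal_smul, ← diagonal_one]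
    congr 1
    ext j
    rw [Pi.smul_apply, smul_eq_mul, mul_comm (ξ j), ← hξ.card_mul_star_mul_self j]
    rfl
  rw [hmc.steer_eq_diagonal_mul_mul, ← hDH, ← Matrix.mul_smul] at hherm ⊢
  rw [vN_mul_mul_eq_of_mul_eq_one hinv (isHermitian_mcCoeffs hρ) hherm, hmc.vN_mcCoeffs hρ]

lemma IsMaxCorrelated.dephase_smul_steer (hmc : IsMaxCorrelated ρ) (hξ : IsUnbiased ξ) :
    dephase stdB ((Fintype.card ι : ℂ) • steer ξ ρ) = ptraceA ρ := by
  rw [dephase_stdB, hmc.ptraceA_eq_diagonal]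
  congr 1
  ext j
  rw [diag_apply, diag_apply, Matrix.smul_apply, hmc.steer_eq_diagonal_mul_mul, mul_diagonal,
    diagonal_mul, smul_eq_mul]
  linear_combination mcCoeffs ρ j j * hξ.card_mul_star_mul_self j

end MaxCorrelated

lemma isUnbiased_fbasis (d : ℕ) (k : Fin d) : IsUnbiased (fbasis d k) := by
  intro j
  rw [Fintype.card_fin, Complex.star_def, ← Complex.normSq_eq_conj_mul_self,
    Complex.normSq_eq_norm_sq]
  simp [fbasis, Complex.norm_exp]

/-- Fourier-basis steering of a maximally correlated state: each outcome has
probability `1/d`, the steered states have the entropy of `ρ` and dephase to `ρ_B`, and the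
average relative-entropy coherence of the steered states is `S(ρ_B) − S(ρ)`. -/
theorem mc_state_fourier_steering
    (d : ℕ) (hd : 0 < d)
    (ρ : Matrix (Fin d × Fin d) (Fin d × Fin d) ℂ) (hρ : IsDensity ρ)
    (hmc : ∀ i j k l, ρ (i, j) (k, l) = if i = j ∧ k = l then ρ (i, i) (k, k) else 0) :
    (∀ k : Fin d,
      sprob (fbasis d k) ρ = 1 / d ∧
      vN ((d : ℂ) • steer (fbasis d k) ρ) = vN ρ ∧
      dephase stdB ((d : ℂ) • steer (fbasis d k) ρ) = ptraceA ρ) ∧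
    ∑ k : Fin d, sprob (fbasis d k) ρ *
        (vN (dephase stdB ((d : ℂ) • steer (fbasis d k) ρ)) -
          vN ((d : ℂ) • steer (fbasis d k) ρ)) =
      vN (ptraceA ρ) - vN ρ := by
  have hmc : IsMaxCorrelated ρ := hmc
  have hsteer (k : Fin d) : sprob (fbasis d k) ρ = 1 / d ∧
      vN ((d : ℂ) • steer (fbasis d k) ρ) = vN ρ ∧
      dephase stdB ((d : ℂ) • steer (fbasis d k) ρ) = ptraceA ρ := by
    have hξ := isUnbiased_fbasis d k
    have hprob := hmc.sprob_eq hξ hρ.2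
    have hvN := hmc.vN_smul_steer hρ.1.1 hξ
    have hdephase := hmc.dephase_smul_steer hξ
    simp only [Fintype.card_fin] at hprob hvN hdephase
    exact ⟨hprob, hvN, hdephase⟩
  refine ⟨hsteer, ?_⟩
  simp only [(hsteer _).1, (hsteer _).2.1, (hsteer _).2.2, Finset.sum_const, Finset.card_univ,
    Fintype.card_fin, nsmul_eq_mul]
  field_simp
end
end

section
/- Every pure bipartite state |Ψ⟩ = Σ_j λ_j |jj⟩ in Schmidt form is a maximally correlated state, and for it the steering-induced coherence equals the entropy of entanglement: Alice's Fourier-basis measurement steers Bob to pure states |φ_k⟩ = Σ_j e^{2πikj/d} λ_j |j⟩ whose relative-entropy coherence in the computational basis equals S(ρ_B) = −Σ_j |λ_j|^2 log |λ_j|^2 for every outcome k. -/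
open Matrix Kronecker BigOperators Finset
open scoped Classical ComplexOrder

noncomputable section

variable {m n q : Type*} [Fintype m] [DecidableEq m] [Fintype n] [DecidableEq n]
  [Fintype q] [DecidableEq q]

/-! In the Schmidt basis `|Ψ⟩⟨Ψ|` has the entry `λ_i λ_k` at `((i,i),(k,k))` and zeros elsewhere,
so it is maximally correlated and `ρ_B = diag(λ_j²)`. Conditioning Alice on `⟨ξ|` leaves Bob in
the pure state `Σ_j ξ̄_j λ_j |j⟩`, which for the Fourier vector `ξ_k` is `φ_k / √d`. Dephasing a
pure state in the computational basis gives `diag(|φ_k(j)|²) = diag(λ_j²)`, because the Fourier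
phases have modulus one; so both entropies are the Shannon entropy of `(λ_j²)`. -/

section

variable {N : Type*}

lemma proj_apply (v : N → ℂ) (i j : N) : proj v i j = v i * star (v j) := rfl

lemma proj_ofReal_smul (c : ℝ) (v : N → ℂ) :
    proj ((c : ℂ) • v) = ((c ^ 2 : ℝ) : ℂ) • proj v := by
  ext i j
  simp [proj_apply]
  ring

lemma proj_stdB [DecidableEq N] (i : N) : proj (stdB i : N → ℂ) = single i i 1 := by
  ext a b
  by_cases ha : i = a <;> by_cases hb : i = b <;> simp [proj_apply, stdB, single_apply, ha, hb]

def schmidtVec [DecidableEq N] (lam : N → ℝ) : N × N → ℂ :=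
  fun p => if p.1 = p.2 then (lam p.1 : ℂ) else 0

lemma proj_schmidtVec_apply [DecidableEq N] (lam : N → ℝ) (i j k l : N) :
    proj (schmidtVec lam) (i, j) (k, l) = if i = j ∧ k = l then (lam i * lam k : ℂ) else 0 := by
  by_cases hij : i = j <;> by_cases hkl : k = l <;> simp [proj_apply, schmidtVec, hij, hkl]

end

section

variable {N : Type*} [Fintype N] [DecidableEq N]

lemma trace_mul_mlog {A : Matrix N N ℂ} (hA : A.IsHermitian) :
    (A * mlog A).trace = ∑ i, (hA.eigenvalues i : ℂ) * Real.log (hA.eigenvalues i) := by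
  set U : Matrix N N ℂ := (hA.eigenvectorUnitary : Matrix N N ℂ)
  set D : Matrix N N ℂ := diagonal (RCLike.ofReal ∘ hA.eigenvalues)
  set L : Matrix N N ℂ := diagonal fun i => (Real.log (hA.eigenvalues i) : ℂ)
  have hU : star U * U = 1 := Matrix.mem_unitaryGroup_iff'.mp hA.eigenvectorUnitary.2
  have hA' : A = U * D * star U := hA.spectral_theorem
  have hlog : mlog A = U * L * star U := by rw [mlog, dif_pos hA]
  calc (A * mlog A).trace
      = (U * D * star U * (U * L * star U)).trace := by rw [hlog, ← hA']
    _ = (U * (D * (star U * U) * L) * star U).trace := by simp only [Matrix.mul_assoc]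
    _ = (D * L).trace := by rw [hU, Matrix.mul_one, trace_mul_cycle, hU, Matrix.one_mul]
    _ = ∑ i, (hA.eigenvalues i : ℂ) * Real.log (hA.eigenvalues i) := by
        rw [diagonal_mul_diagonal, trace_diagonal]
        rfl

lemma vN_eq_neg_sum_eigenvalues {A : Matrix N N ℂ} (hA : A.IsHermitian) :
    vN A = -∑ i, hA.eigenvalues i * Real.log (hA.eigenvalues i) := by
  rw [vN, trace_mul_mlog hA]
  simp [← Complex.ofReal_mul]

/-- `hA.eigenvalues` need not keep the diagonal entries in place, so only the multisets agree. -/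
lemma Matrix.IsHermitian.map_eigenvalues_diagonal (p : N → ℝ)
    (hA : (diagonal fun i => (p i : ℂ)).IsHermitian) :
    univ.val.map hA.eigenvalues = univ.val.map p := by
  apply Multiset.map_injective Complex.ofReal_injective
  have h := hA.roots_charpoly_eq_eigenvalues
  rw [charpoly_diagonal, Polynomial.roots_prod _ _ (prod_ne_zero_iff.mpr
    fun i _ => Polynomial.X_sub_C_ne_zero _)] at h
  simpa [Multiset.map_map] using h.symm

lemma vN_diagonal (p : N → ℝ) :
    vN (diagonal fun i => (p i : ℂ)) = -∑ i, p i * Real.log (p i) := by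
  have hA : (diagonal fun i => (p i : ℂ)).IsHermitian :=
    isHermitian_diagonal_of_self_adjoint _ (funext fun i => Complex.conj_ofReal _)
  have h := congrArg (fun s => (s.map fun x => x * Real.log x).sum) hA.map_eigenvalues_diagonal
  simp only [Multiset.map_map, Function.comp_def] at h
  rw [vN_eq_neg_sum_eigenvalues hA, sum_eq_multiset_sum, sum_eq_multiset_sum, h]

lemma dephase_stdB_s7 (ρ : Matrix N N ℂ) : dephase stdB ρ = diagonal fun i => ρ i i := by
  simp only [dephase, proj_stdB, single_mul_mul_single, one_mul, mul_one]
  exact sum_single_eq_diagonal _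

lemma vN_dephase_stdB_proj (v : N → ℂ) :
    vN (dephase stdB (proj v)) = -∑ i, ‖v i‖ ^ 2 * Real.log (‖v i‖ ^ 2) := by
  rw [dephase_stdB_s7, ← vN_diagonal]
  congr 2 with i
  rw [proj_apply, Complex.ofReal_pow, ← Complex.mul_conj']
  rfl

lemma ptraceA_proj_schmidtVec (lam : N → ℝ) :
    ptraceA (proj (schmidtVec lam)) = diagonal fun j => ((lam j ^ 2 : ℝ) : ℂ) := by
  ext j j'
  by_cases h : j = j' <;> simp [ptraceA, proj_schmidtVec_apply, ite_and, h, sq]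

lemma steer_proj_schmidtVec (lam : N → ℝ) (ξ : N → ℂ) :
    steer ξ (proj (schmidtVec lam)) = proj fun j => star (ξ j) * lam j := by
  ext j j'
  simp only [steer, of_apply, proj_schmidtVec_apply]
  simp [proj_apply, ite_and]
  ring

end

lemma sqrt_mul_star_fbasis {d : ℕ} (k j : Fin d) :
    (Real.sqrt d : ℂ) * star (fbasis d k j) =
      Complex.exp (2 * Real.pi * Complex.I * (k : ℕ) * (j : ℕ) / d) := by
  have hd : (Real.sqrt d : ℂ) ≠ 0 := by
    exact_mod_cast (Real.sqrt_pos.mpr (Nat.cast_pos.mpr k.pos)).ne'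
  simp [fbasis, ← Complex.exp_conj, map_div₀, map_ofNat, hd]

lemma norm_exp_mul_ofReal (d : ℕ) (k j : Fin d) (x : ℝ) :
    ‖Complex.exp (2 * Real.pi * Complex.I * (k : ℕ) * (j : ℕ) / d) * x‖ = |x| := by
  simp [Complex.norm_exp]

theorem pure_schmidt_steering_general
    (d : ℕ) (lam : Fin d → ℝ) :
    let ψ : Fin d × Fin d → ℂ := fun p => if p.1 = p.2 then (lam p.1 : ℂ) else 0
    let φ : Fin d → Fin d → ℂ := fun k j =>
      Complex.exp (2 * Real.pi * Complex.I * (k : ℕ) * (j : ℕ) / d) * (lam j : ℂ)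
    (∀ i j k l, (proj ψ) (i, j) (k, l) =
      if i = j ∧ k = l then (proj ψ) (i, i) (k, k) else 0) ∧
    (∀ k : Fin d,
      (d : ℂ) • steer (fbasis d k) (proj ψ) = proj (φ k) ∧
      vN (dephase stdB (proj (φ k))) = -∑ j, (lam j) ^ 2 * Real.log ((lam j) ^ 2)) ∧
    vN (ptraceA (proj ψ)) = -∑ j, (lam j) ^ 2 * Real.log ((lam j) ^ 2) := by
  intro ψ φ
  have hψ : ψ = schmidtVec lam := rfl
  refine ⟨fun i j k l => ?_, fun k => ⟨?_, ?_⟩, ?_⟩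
  · simp only [hψ, proj_schmidtVec_apply, and_self, if_true]
  · have hφ : φ k = (Real.sqrt d : ℂ) • fun j => star (fbasis d k j) * lam j := by
      ext j
      rw [Pi.smul_apply, smul_eq_mul, ← mul_assoc, sqrt_mul_star_fbasis]
    rw [hφ, proj_ofReal_smul, Real.sq_sqrt d.cast_nonneg, hψ, steer_proj_schmidtVec]
    norm_cast
  · rw [vN_dephase_stdB_proj]
    simp only [φ, norm_exp_mul_ofReal, sq_abs]
  · rw [hψ, ptraceA_proj_schmidtVec, vN_diagonal]

/-- a pure state in Schmidt form `|Ψ⟩ = Σ λ_j|jj⟩` is maximally correlated;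
Alice's Fourier measurement steers Bob to the pure states `|φ_k⟩ = Σ e^{2πikj/d} λ_j |j⟩`,
whose coherence equals the entropy of entanglement `−Σ λ_j² log λ_j²` for every `k`. -/
theorem pure_schmidt_steering
    (d : ℕ) (hd : 0 < d) (lam : Fin d → ℝ)
    (hlam : ∀ j, 0 ≤ lam j) (hsum : ∑ j, (lam j) ^ 2 = 1) :
    let ψ : Fin d × Fin d → ℂ := fun p => if p.1 = p.2 then (lam p.1 : ℂ) else 0
    let φ : Fin d → Fin d → ℂ := fun k j =>
      Complex.exp (2 * Real.pi * Complex.I * (k : ℕ) * (j : ℕ) / d) * (lam j : ℂ)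
    (∀ i j k l, (proj ψ) (i, j) (k, l) =
      if i = j ∧ k = l then (proj ψ) (i, i) (k, k) else 0) ∧
    (∀ k : Fin d,
      (d : ℂ) • steer (fbasis d k) (proj ψ) = proj (φ k) ∧
      vN (dephase stdB (proj (φ k))) = -∑ j, (lam j) ^ 2 * Real.log ((lam j) ^ 2)) ∧
    vN (ptraceA (proj ψ)) = -∑ j, (lam j) ^ 2 * Real.log ((lam j) ^ 2) :=
  pure_schmidt_steering_general d lam

end
end
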